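/- Let F be a centrally symmetric convex polygon centered at the origin with generator segments T₁, …, T_l (so F = T₁ + ⋯ + T_l), edges M₁, …, M_{2l} in circular order with edge vectors M⃗_i satisfying M⃗_{i+l} = −M⃗_i. Let t = Σ_{i=2}^{k−1} M⃗_i + λ_k M⃗_k + λ₁ M⃗₁ for some 2 ≤ k ≤ l, 0 ≤ λ_k ≤ 1, and 0 ≤ λ₁ < 1. Then F ∩ (F + t) = F* + t/2, where F* = (1−λ₁)T₁ + (1−λ_k)T_k + T_{k+1} + ⋯ + T_l. -/

import Mathlib

open Set Pointwise

/-- The segment centered at the origin with edge vector `v` (from `-v/2` to `v/2`). -/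
def cseg2 (v : Fin 2 → ℝ) : Set (Fin 2 → ℝ) :=
  segment ℝ (-((2 : ℝ)⁻¹ • v)) ((2 : ℝ)⁻¹ • v)

namespace HSYZ

abbrev V := Fin 2 → ℝ

noncomputable def dt (a b : V) : ℝ := a 0 * b 1 - a 1 * b 0

lemma dt_smul_right (a : V) (r : ℝ) (b : V) : dt a (r • b) = r * dt a b := by
  simp [dt]; ring

lemma dt_smul_left (a : V) (r : ℝ) (b : V) : dt (r • a) b = r * dt a b := by
  simp [dt]; ring

lemma dt_add_right (a b c : V) : dt a (b + c) = dt a b + dt a c := by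
  simp [dt]; ring

lemma dt_sub_right (a b c : V) : dt a (b - c) = dt a b - dt a c := by
  simp [dt]; ring

lemma dt_neg_right (a b : V) : dt a (-b) = -dt a b := by
  simp [dt]; ring

lemma dt_anti (a b : V) : dt a b = -dt b a := by simp [dt]; ring

lemma dt_self (a : V) : dt a a = 0 := by simp [dt]; ring

noncomputable def dtL (a : V) : V →ₗ[ℝ] ℝ where
  toFun := dt a
  map_add' := fun x y => dt_add_right a x y
  map_smul' := fun r x => by simpa using dt_smul_right a r x

@[simp] lemma dtL_apply (a b : V) : dtL a b = dt a b := rfl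

lemma dt_sum_right (a : V) (s : Finset ℕ) (f : ℕ → V) :
    dt a (∑ i ∈ s, f i) = ∑ i ∈ s, dt a (f i) := by
  exact map_sum (dtL a) f s

/-- coordinate flip, reverses orientation -/
def flip (a : V) : V := fun w => a (1 - w)

@[simp] lemma flip_apply0 (a : V) : flip a 0 = a 1 := rfl
@[simp] lemma flip_apply1 (a : V) : flip a 1 = a 0 := rfl

lemma flip_flip (a : V) : flip (flip a) = a := by
  funext w
  fin_cases w <;> rfl

lemma flip_smul (r : ℝ) (a : V) : flip (r • a) = r • flip a := rfl

lemma dt_flip (a b : V) : dt (flip a) (flip b) = -dt a b := by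
  simp [dt]

lemma flip_sum (s : Finset ℕ) (f : ℕ → V) :
    flip (∑ i ∈ s, f i) = ∑ i ∈ s, flip (f i) := by
  funext w
  simp [flip, Finset.sum_apply]

lemma mem_cseg2_iff {v x : V} : x ∈ cseg2 v ↔ ∃ s : ℝ, |s| ≤ 2⁻¹ ∧ x = s • v := by
  rw [cseg2, segment_eq_image]
  constructor
  · rintro ⟨θ, hθ, rfl⟩
    simp only [Set.mem_Icc] at hθ
    refine ⟨θ - 2⁻¹, by rw [abs_le]; constructor <;> linarith, ?_⟩
    module
  · rintro ⟨s, hs, rfl⟩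
    rw [abs_le] at hs
    refine ⟨s + 2⁻¹, by simp only [Set.mem_Icc]; constructor <;> linarith, ?_⟩
    module

lemma mem_zono_iff (s : Finset ℕ) (v : ℕ → V) (x : V) :
    x ∈ ∑ i ∈ s, cseg2 (v i) ↔
      ∃ c : ℕ → ℝ, (∀ i ∈ s, |c i| ≤ 2⁻¹) ∧ x = ∑ i ∈ s, c i • v i := by
  classical
  induction s using Finset.induction_on generalizing x with
  | empty =>
    simp only [Finset.sum_empty]
    constructor
    · intro h; exact ⟨0, by simp, by simpa using h⟩
    · rintro ⟨c, -, rfl⟩; simp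
  | insert _ _ ha ih =>
    rename_i a s
    rw [Finset.sum_insert ha, Set.mem_add]
    constructor
    · rintro ⟨y, hy, z, hz, rfl⟩
      obtain ⟨sa, hsa, rfl⟩ := mem_cseg2_iff.1 hy
      obtain ⟨c, hc, rfl⟩ := (ih z).1 hz
      refine ⟨Function.update c a sa, ?_, ?_⟩
      · intro i hi
        rcases Finset.mem_insert.1 hi with rfl | hi
        · simpa using hsa
        · rw [Function.update_of_ne (fun h => ha (by rwa [h] at hi))]; exact hc i hi
      · rw [Finset.sum_insert ha, Function.update_self]
        congr 1
        refine Finset.sum_congr rfl fun i hi => ?_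
        rw [Function.update_of_ne (fun h => ha (by rwa [h] at hi))]
    · rintro ⟨c, hc, rfl⟩
      rw [Finset.sum_insert ha]
      exact ⟨c a • v a, mem_cseg2_iff.2 ⟨c a, hc a (Finset.mem_insert_self a s), rfl⟩,
        ∑ i ∈ s, c i • v i,
        (ih _).2 ⟨c, fun i hi => hc i (Finset.mem_insert_of_mem hi), rfl⟩, rfl⟩

lemma all_nonneg_of_sum_abs_le {s : Finset ℕ} {f : ℕ → ℝ}
    (h : ∑ i ∈ s, |f i| ≤ ∑ i ∈ s, f i) : ∀ i ∈ s, 0 ≤ f i := by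
  have h0 : ∑ i ∈ s, (|f i| - f i) = 0 := by
    rw [Finset.sum_sub_distrib]
    have := Finset.sum_le_sum (fun i (_ : i ∈ s) => le_abs_self (f i))
    linarith
  intro i hi
  have := (Finset.sum_eq_zero_iff_of_nonneg
    (fun i (_ : i ∈ s) => sub_nonneg.2 (le_abs_self (f i)))).1 h0 i hi
  have habs := abs_nonneg (f i)
  linarith [sub_eq_zero.1 this]

lemma all_nonpos_of_sum_abs_le {s : Finset ℕ} {f : ℕ → ℝ}
    (h : ∑ i ∈ s, |f i| ≤ -∑ i ∈ s, f i) : ∀ i ∈ s, f i ≤ 0 := by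
  have := all_nonneg_of_sum_abs_le (s := s) (f := fun i => -f i) ?_
  · intro i hi; linarith [this i hi]
  · simpa [Finset.sum_neg_distrib] using h

lemma collinear_of_dt_eq_zero {a b : V} (h : dt a b = 0) (ha : a ≠ 0) :
    ∃ c : ℝ, b = c • a := by
  have ha' : a 0 ≠ 0 ∨ a 1 ≠ 0 := by
    by_contra hc
    push_neg at hc
    exact ha (funext fun w => by fin_cases w <;> simp [hc.1, hc.2])
  rcases ha' with h0 | h1
  · refine ⟨b 0 / a 0, funext fun w => ?_⟩
    fin_cases w
    · simp; field_simp
    · simp only [Pi.smul_apply, smul_eq_mul]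
      rw [dt] at h
      field_simp
      simp only [Fin.mk_one, Fin.isValue, Fin.zero_eta] at *
      nlinarith [h]
  · refine ⟨b 1 / a 1, funext fun w => ?_⟩
    fin_cases w
    · simp only [Pi.smul_apply, smul_eq_mul]
      rw [dt] at h
      field_simp
      simp only [Fin.mk_one, Fin.isValue, Fin.zero_eta] at *
      nlinarith [h]
    · simp; field_simp

lemma hull_le {S : Set V} (f : V →ₗ[ℝ] ℝ) (c : ℝ) (h : ∀ y ∈ S, f y ≤ c) {z : V}
    (hz : z ∈ convexHull ℝ S) : f z ≤ c := by
  have : convexHull ℝ S ⊆ {w | f w ≤ c} :=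
    convexHull_min h (convex_halfSpace_le f.isLinear c)
  exact this hz

-- face lemma
lemma face_subset {T : Finset V} (f : V →ₗ[ℝ] ℝ) {c : ℝ} (hT : ∀ y ∈ T, f y ≤ c)
    {z : V} (hz : z ∈ convexHull ℝ (T : Set V)) (hzc : f z = c) :
    z ∈ convexHull ℝ ((T.filter (fun y => f y = c) : Finset V) : Set V) := by
  classical
  rw [Finset.convexHull_eq] at hz
  obtain ⟨w, hw0, hw1, hwz⟩ := hz
  have hcm : T.centerMass w id = ∑ y ∈ T, w y • y := by
    rw [Finset.centerMass_eq_of_sum_1 _ _ hw1]; rfl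
  have hfz : ∑ y ∈ T, w y * f y = c := by
    have : f (T.centerMass w id) = c := by rw [hwz, hzc]
    rw [hcm, map_sum] at this
    simpa [map_smul] using this
  have hkey : ∀ y ∈ T, w y * (c - f y) = 0 := by
    have hsum : ∑ y ∈ T, w y * (c - f y) = 0 := by
      have : ∑ y ∈ T, w y * (c - f y) = c * (∑ y ∈ T, w y) - ∑ y ∈ T, w y * f y := by
        rw [Finset.mul_sum, ← Finset.sum_sub_distrib]
        exact Finset.sum_congr rfl fun y _ => by ring
      rw [this, hw1, hfz]; ring
    intro y hy
    exact (Finset.sum_eq_zero_iff_of_nonneg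
      (fun y hy => mul_nonneg (hw0 y hy) (by linarith [hT y hy]))).1 hsum y hy
  have hz0 : ∀ y ∈ T, f y ≠ c → w y = 0 := by
    intro y hy hne
    rcases mul_eq_zero.1 (hkey y hy) with h | h
    · exact h
    · exact absurd (by linarith [sub_eq_zero.1 h] : f y = c) hne
  set Tm := T.filter (fun y => f y = c) with hTm
  have hsub : Tm ⊆ T := Finset.filter_subset _ _
  have hsum1 : ∑ y ∈ Tm, w y = 1 := by
    rw [← hw1]
    exact Finset.sum_subset hsub (fun y hy hny =>
      hz0 y hy (fun hf => hny (Finset.mem_filter.2 ⟨hy, hf⟩)))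
  have hvec : ∑ y ∈ Tm, w y • y = z := by
    rw [← hwz, hcm]
    exact Finset.sum_subset hsub (fun y hy hny => by
      have : ¬ f y = c := fun hf => hny (Finset.mem_filter.2 ⟨hy, hf⟩)
      rw [hz0 y hy this, zero_smul])
  have hmem := Finset.centerMass_mem_convexHull Tm (fun y hy => hw0 y (hsub hy))
    (by rw [hsum1]; norm_num) (fun y (hy : y ∈ Tm) => Finset.mem_coe.2 hy)
  have hz : (Tm.centerMass w fun y => y) = z := by
    rw [show (Tm.centerMass w fun y => y) = Tm.centerMass w id from rfl,
      Finset.centerMass_eq_of_sum_1 _ _ hsum1]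
    simpa using hvec
  rwa [hz] at hmem

lemma two_max {T : Finset V} (f : V →ₗ[ℝ] ℝ) {c : ℝ} (hT : ∀ y ∈ T, f y ≤ c)
    {z1 z2 : V} (h1 : z1 ∈ convexHull ℝ (T : Set V)) (h2 : z2 ∈ convexHull ℝ (T : Set V))
    (hc1 : f z1 = c) (hc2 : f z2 = c) (hne : z1 ≠ z2) :
    ∃ y1 ∈ T, ∃ y2 ∈ T, y1 ≠ y2 ∧ f y1 = c ∧ f y2 = c := by
  classical
  have m1 := face_subset f hT h1 hc1
  have m2 := face_subset f hT h2 hc2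
  set Tm := T.filter (fun y => f y = c) with hTm
  by_contra hcon
  have hsing : ∀ y1 ∈ Tm, ∀ y2 ∈ Tm, y1 = y2 := by
    intro y1 hy1 y2 hy2
    rcases Finset.mem_filter.1 hy1 with ⟨hy1T, hy1c⟩
    rcases Finset.mem_filter.1 hy2 with ⟨hy2T, hy2c⟩
    by_contra hne'
    exact hcon ⟨y1, hy1T, y2, hy2T, hne', hy1c, hy2c⟩
  obtain ⟨a, ha⟩ : Tm.Nonempty := by
    rcases Finset.eq_empty_or_nonempty Tm with h | h
    · rw [h] at m1; simpa using m1
    · exact h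
  have hsub : (Tm : Set V) ⊆ {a} := fun y hy => by
    simp only [Set.mem_singleton_iff]
    exact hsing y (Finset.mem_coe.1 hy) a ha
  have : convexHull ℝ (Tm : Set V) ⊆ {a} := by
    have := convexHull_mono hsub (𝕜 := ℝ)
    rwa [convexHull_singleton] at this
  exact hne ((this m1).trans (this m2).symm)

-- telescoping
lemma tele (b : ℕ → ℝ) {p r : ℕ} (hpr : p ≤ r) :
    ∑ m ∈ Finset.Ico p r, (b (m + 1) - b m) = b r - b p := by
  rw [Finset.sum_Ico_eq_sub _ hpr, Finset.sum_range_sub, Finset.sum_range_sub]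
  ring

lemma mono_walk (n : ℕ) (b : ℕ → ℝ) (H : ℝ) (hclose : b n = b 0)
    (hbd : ∀ m ≤ n, |b m| ≤ H)
    (hvar : ∑ m ∈ Finset.range n, |b (m + 1) - b m| = 4 * H)
    (p r : ℕ) (hpr : p < r) (hrn : r ≤ n) (hbp : b p = H) (hbr : b r = -H) :
    (∀ m, p ≤ m → m < r → b (m + 1) - b m ≤ 0) ∧
      (∀ m, m < n → m < p ∨ r ≤ m → 0 ≤ b (m + 1) - b m) := by
  have hb0 := hbd 0 (Nat.zero_le n)
  have hH : 0 ≤ H := le_trans (abs_nonneg _) hb0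
  rw [abs_le] at hb0
  have h0p : (0:ℕ) ≤ p := Nat.zero_le p
  have s1 : ∑ m ∈ Finset.Ico 0 p, (b (m+1) - b m) = b p - b 0 := tele b h0p
  have s2 : ∑ m ∈ Finset.Ico p r, (b (m+1) - b m) = b r - b p := tele b hpr.le
  have s3 : ∑ m ∈ Finset.Ico r n, (b (m+1) - b m) = b n - b r := tele b hrn
  have a1 : |b p - b 0| ≤ ∑ m ∈ Finset.Ico 0 p, |b (m+1) - b m| := by
    rw [← s1]; exact Finset.abs_sum_le_sum_abs _ _
  have a2 : |b r - b p| ≤ ∑ m ∈ Finset.Ico p r, |b (m+1) - b m| := by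
    rw [← s2]; exact Finset.abs_sum_le_sum_abs _ _
  have a3 : |b n - b r| ≤ ∑ m ∈ Finset.Ico r n, |b (m+1) - b m| := by
    rw [← s3]; exact Finset.abs_sum_le_sum_abs _ _
  have hsplit : ∑ m ∈ Finset.Ico 0 p, |b (m+1) - b m| + ∑ m ∈ Finset.Ico p r, |b (m+1) - b m|
      + ∑ m ∈ Finset.Ico r n, |b (m+1) - b m| = 4 * H := by
    rw [Finset.sum_Ico_consecutive _ h0p hpr.le, Finset.sum_Ico_consecutive _ (Nat.zero_le r) hrn]
    rw [← Finset.range_eq_Ico]; exact hvar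
  have l1 : H - b 0 ≤ ∑ m ∈ Finset.Ico 0 p, |b (m+1) - b m| :=
    by linarith [le_abs_self (b p - b 0), a1, hbp.le, hbp.ge]
  have l2 : 2 * H ≤ ∑ m ∈ Finset.Ico p r, |b (m+1) - b m| :=
    by linarith [neg_le_abs (b r - b p), a2]
  have l3 : b 0 + H ≤ ∑ m ∈ Finset.Ico r n, |b (m+1) - b m| :=
    by linarith [le_abs_self (b n - b r), a3]
  have q1 : ∑ m ∈ Finset.Ico 0 p, |b (m+1) - b m| = H - b 0 := by linarith
  have q2 : ∑ m ∈ Finset.Ico p r, |b (m+1) - b m| = 2 * H := by linarith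
  have q3 : ∑ m ∈ Finset.Ico r n, |b (m+1) - b m| = b 0 + H := by linarith
  constructor
  · intro m hm1 hm2
    have hle : ∑ m ∈ Finset.Ico p r, |b (m+1) - b m|
        ≤ -∑ m ∈ Finset.Ico p r, (b (m+1) - b m) := by rw [s2, q2]; linarith
    exact all_nonpos_of_sum_abs_le hle m (Finset.mem_Ico.2 ⟨hm1, hm2⟩)
  · intro m hmn hor
    rcases hor with h | h
    · have hle : ∑ m ∈ Finset.Ico 0 p, |b (m+1) - b m|
          ≤ ∑ m ∈ Finset.Ico 0 p, (b (m+1) - b m) := by rw [s1, q1]; linarith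
      exact all_nonneg_of_sum_abs_le hle m (Finset.mem_Ico.2 ⟨Nat.zero_le m, h⟩)
    · have hle : ∑ m ∈ Finset.Ico r n, |b (m+1) - b m|
          ≤ ∑ m ∈ Finset.Ico r n, (b (m+1) - b m) := by rw [s3, q3]; linarith
      exact all_nonneg_of_sum_abs_le hle m (Finset.mem_Ico.2 ⟨h, hmn⟩)

lemma mono_walk_neg (n : ℕ) (b : ℕ → ℝ) (H : ℝ) (hclose : b n = b 0)
    (hbd : ∀ m ≤ n, |b m| ≤ H)
    (hvar : ∑ m ∈ Finset.range n, |b (m + 1) - b m| = 4 * H)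
    (p r : ℕ) (hpr : p < r) (hrn : r ≤ n) (hbp : b p = -H) (hbr : b r = H) :
    (∀ m, p ≤ m → m < r → 0 ≤ b (m + 1) - b m) ∧
      (∀ m, m < n → m < p ∨ r ≤ m → b (m + 1) - b m ≤ 0) := by
  have h1 : (fun m => -b m) n = (fun m => -b m) 0 := by simp [hclose]
  have h2 : ∀ m ≤ n, |(fun m => -b m) m| ≤ H := fun m hm => by simpa using hbd m hm
  have h3 : ∑ m ∈ Finset.range n, |(fun m => -b m) (m+1) - (fun m => -b m) m| = 4*H := by
    rw [← hvar]
    refine Finset.sum_congr rfl fun m _ => ?_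
    simp only
    rw [← abs_neg]; congr 1; ring
  have h4 : (fun m => -b m) p = H := by simp [hbp]
  have h5 : (fun m => -b m) r = -H := by simp [hbr]
  obtain ⟨A, B⟩ := mono_walk n (fun m => -b m) H h1 h2 h3 p r hpr hrn h4 h5
  constructor
  · intro m hm1 hm2
    have := A m hm1 hm2
    linarith
  · intro m hm1 hm2
    have := B m hm1 hm2
    linarith


lemma cramer (a b x : V) : dt a b • x = dt a x • b - dt b x • a := by
  funext w
  fin_cases w <;> · simp [dt]; ring

lemma plucker (a b c d : V) :
    dt a b * dt c d = dt a c * dt b d - dt a d * dt b c := by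
  simp [dt]; ring

lemma Zhard : ∀ (n : ℕ) (s : Finset ℕ), s.card = n → 2 ≤ n →
    ∀ (v : ℕ → V), (∀ i ∈ s, ∀ j ∈ s, i < j → 0 < dt (v i) (v j)) →
    ∀ x : V, (∀ i ∈ s, |dt (v i) x| ≤ (∑ j ∈ s, |dt (v i) (v j)|) / 2) →
    ∃ c : ℕ → ℝ, (∀ i ∈ s, |c i| ≤ 2⁻¹) ∧ x = ∑ i ∈ s, c i • v i := by
  intro n
  induction n using Nat.strong_induction_on with
  | _ n ih =>
    intro s hcard hn2 v hord x hslab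
    classical
    have hne : s.Nonempty := Finset.card_pos.1 (by omega)
    set M := s.max' hne with hM
    have hMs : M ∈ s := s.max'_mem hne
    set s' := s.erase M with hs'
    have hins : insert M s' = s := Finset.insert_erase hMs
    have hMns' : M ∉ s' := Finset.notMem_erase M s
    have hcard' : s'.card = n - 1 := by rw [hs', Finset.card_erase_of_mem hMs, hcard]
    have hne' : s'.Nonempty := Finset.card_pos.1 (by omega)
    have hsub' : s' ⊆ s := Finset.erase_subset M s
    have hltM : ∀ i ∈ s', i < M := fun i hi =>
      lt_of_le_of_ne (s.le_max' i (hsub' hi)) (Finset.ne_of_mem_erase hi)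
    have hd : ∀ i ∈ s', 0 < dt (v i) (v M) := fun i hi =>
      hord i (hsub' hi) M hMs (hltM i hi)
    -- sum over s splits
    have hsum_split : ∀ g : ℕ → ℝ, ∑ j ∈ s, g j = g M + ∑ j ∈ s', g j := fun g => by
      rw [← hins, Finset.sum_insert hMns']
    -- the M-slab
    have hMslab : |dt (v M) x| ≤ (∑ j ∈ s', dt (v j) (v M)) / 2 := by
      have := hslab M hMs
      rw [hsum_split (fun j => |dt (v M) (v j)|), dt_self, abs_zero, zero_add] at this
      have heq : ∑ j ∈ s', |dt (v M) (v j)| = ∑ j ∈ s', dt (v j) (v M) := by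
        refine Finset.sum_congr rfl fun j hj => ?_
        rw [dt_anti (v M) (v j), abs_neg, abs_of_pos (hd j hj)]
      rwa [heq] at this
    rcases Nat.lt_or_ge n 3 with h3 | h3
    · -- base case : n = 2, s = {i0, M}
      have hcard1 : s'.card = 1 := by omega
      obtain ⟨i0, hi0⟩ := Finset.card_eq_one.1 hcard1
      have hi0s' : i0 ∈ s' := by rw [hi0]; exact Finset.mem_singleton_self i0
      have hi0M : i0 < M := hltM i0 hi0s'
      have hd0 : 0 < dt (v i0) (v M) := hd i0 hi0s'
      set d := dt (v i0) (v M) with hdd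
      have hsum' : ∀ g : ℕ → ℝ, ∑ j ∈ s', g j = g i0 := fun g => by
        rw [hi0, Finset.sum_singleton]
      have hsum'V : ∀ g : ℕ → V, ∑ j ∈ s', g j = g i0 := fun g => by
        rw [hi0, Finset.sum_singleton]
      have hslab0 : |dt (v i0) x| ≤ d / 2 := by
        have := hslab i0 (hsub' hi0s')
        rw [hsum_split (fun j => |dt (v i0) (v j)|), hsum' (fun j => |dt (v i0) (v j)|),
          dt_self, abs_zero, add_zero, abs_of_pos hd0] at this
        exact this
      have hslabM : |dt (v M) x| ≤ d / 2 := by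
        have := hMslab
        rwa [hsum' (fun j => dt (v j) (v M))] at this
      refine ⟨fun i => if i = i0 then -dt (v M) x / d else if i = M then dt (v i0) x / d else 0,
        ?_, ?_⟩
      · intro i hi
        beta_reduce
        rw [← hins] at hi
        rcases Finset.mem_insert.1 hi with rfl | hi
        · rw [if_neg (show ¬ M = i0 by omega), if_pos rfl, abs_div, abs_of_pos hd0,
            div_le_iff₀ hd0]
          calc |dt (v i0) x| ≤ d/2 := hslab0
          _ = 2⁻¹ * d := by ring
        · rw [hi0, Finset.mem_singleton] at hi
          subst hi
          rw [if_pos rfl, abs_div, abs_neg, abs_of_pos hd0, div_le_iff₀ hd0]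
          calc |dt (v M) x| ≤ d/2 := hslabM
          _ = 2⁻¹ * d := by ring
      · rw [← hins, Finset.sum_insert hMns', hsum'V (fun j =>
          (if j = i0 then -dt (v M) x / d else if j = M then dt (v i0) x / d else 0) • v j)]
        beta_reduce
        rw [if_neg (show ¬ M = i0 by omega), if_pos rfl, if_pos rfl]
        have hcr := cramer (v i0) (v M) x
        have hdne : d ≠ 0 := ne_of_gt hd0
        rw [← hdd] at hcr
        apply smul_right_injective V hdne
        show d • x = d • ((dt (v i0) x / d) • v M + (-dt (v M) x / d) • v i0)
        rw [hcr, smul_add, smul_smul, smul_smul, div_eq_mul_inv, div_eq_mul_inv]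
        have h1 : d * (-dt (v M) x * d⁻¹) = -dt (v M) x := by field_simp
        have h2 : d * (dt (v i0) x * d⁻¹) = dt (v i0) x := by field_simp
        rw [h1, h2]
        module
    · -- inductive step
      have hcard2 : 2 ≤ s'.card := by omega
      set Sf := fun i => ∑ j ∈ s', |dt (v i) (v j)| with hSf
      set L := fun i => (dt (v i) x - Sf i / 2) / dt (v i) (v M) with hL
      set R := fun i => (dt (v i) x + Sf i / 2) / dt (v i) (v M) with hR
      -- full slab rewritten
      have hslab' : ∀ i ∈ s', |dt (v i) x| ≤ Sf i / 2 + dt (v i) (v M) / 2 := by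
        intro i hi
        have := hslab i (hsub' hi)
        rw [hsum_split (fun j => |dt (v i) (v j)|)] at this
        rw [abs_of_pos (hd i hi)] at this
        calc |dt (v i) x| ≤ (dt (v i) (v M) + Sf i) / 2 := this
        _ = Sf i / 2 + dt (v i) (v M) / 2 := by ring
      have htri : ∀ X Y : ℝ, |X - Y| ≤ |X| + |Y| := fun X Y => by
        rw [sub_eq_add_neg]
        exact (abs_add_le _ _).trans (by rw [abs_neg])
      have hSfnn : ∀ i, 0 ≤ Sf i := fun i => Finset.sum_nonneg fun j _ => abs_nonneg _
      have hpair_bound : ∀ i ∈ s', ∀ i' ∈ s', i ≠ i' →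
          dt (v i) (v i') * dt x (v M)
            ≤ dt (v i') (v M) * (Sf i / 2) + dt (v i) (v M) * (Sf i' / 2) := by
        intro i hi i' hi' hii'
        have habs : |dt (v i) (v i') * dt x (v M)| ≤ |dt (v i) (v i')| * |dt (v M) x| := by
          rw [abs_mul, dt_anti x (v M), abs_neg]
        have hterm : ∀ j ∈ s', |dt (v i) (v i')| * dt (v j) (v M) ≤
            dt (v i') (v M) * |dt (v i) (v j)| + dt (v i) (v M) * |dt (v i') (v j)| := by
          intro j hj
          have hplk : dt (v i) (v i') * dt (v j) (v M)
              = dt (v i) (v j) * dt (v i') (v M) - dt (v i) (v M) * dt (v i') (v j) :=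
            plucker _ _ _ _
          have h1 : |dt (v i) (v i')| * dt (v j) (v M) = |dt (v i) (v i') * dt (v j) (v M)| := by
            rw [abs_mul, abs_of_pos (hd j hj)]
          rw [h1, hplk]
          calc |dt (v i) (v j) * dt (v i') (v M) - dt (v i) (v M) * dt (v i') (v j)|
              ≤ |dt (v i) (v j) * dt (v i') (v M)| + |dt (v i) (v M) * dt (v i') (v j)| :=
                htri _ _
            _ = dt (v i') (v M) * |dt (v i) (v j)| + dt (v i) (v M) * |dt (v i') (v j)| := by
                rw [abs_mul, abs_mul, abs_of_pos (hd i' hi'), abs_of_pos (hd i hi)]; ring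
        have hsumterm : |dt (v i) (v i')| * ∑ j ∈ s', dt (v j) (v M)
            ≤ dt (v i') (v M) * Sf i + dt (v i) (v M) * Sf i' := by
          rw [Finset.mul_sum, hSf, Finset.mul_sum, Finset.mul_sum, ← Finset.sum_add_distrib]
          exact Finset.sum_le_sum hterm
        calc dt (v i) (v i') * dt x (v M) ≤ |dt (v i) (v i')| * |dt (v M) x| :=
            le_trans (le_abs_self _) habs
          _ ≤ |dt (v i) (v i')| * ((∑ j ∈ s', dt (v j) (v M)) / 2) :=
            mul_le_mul_of_nonneg_left hMslab (abs_nonneg _)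
          _ ≤ (dt (v i') (v M) * Sf i + dt (v i) (v M) * Sf i') / 2 := by linarith [hsumterm]
          _ = dt (v i') (v M) * (Sf i / 2) + dt (v i) (v M) * (Sf i' / 2) := by ring
      -- Helly pairwise inequalities
      have hLR : ∀ i ∈ s', ∀ i' ∈ s', L i ≤ R i' := by
        intro i hi i' hi'
        rcases eq_or_ne i i' with rfl | hii'
        · rw [hL, hR]
          apply (div_le_div_iff_of_pos_right (hd i hi)).2
          linarith [hSfnn i]
        · rw [hL, hR, div_le_div_iff₀ (hd i hi) (hd i' hi')]
          have hpl : dt (v i') (v M) * dt (v i) x - dt (v i) (v M) * dt (v i') x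
              = dt (v i) (v i') * dt x (v M) := by simp [dt]; ring
          have hb := hpair_bound i hi i' hi' hii'
          nlinarith [hb, hpl]
      have hmaxb : ∀ i ∈ s', L i ≤ 2⁻¹ := by
        intro i hi
        rw [hL, div_le_iff₀ (hd i hi)]
        have := (abs_le.1 (hslab' i hi)).2
        linarith
      have hminb : ∀ i ∈ s', -2⁻¹ ≤ R i := by
        intro i hi
        rw [hR, le_div_iff₀ (hd i hi)]
        have := (abs_le.1 (hslab' i hi)).1
        linarith
      set cM := max (-2⁻¹) (s'.sup' hne' L) with hcM
      have hcM1 : ∀ i ∈ s', L i ≤ cM := fun i hi =>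
        le_trans (Finset.le_sup' L hi) (le_max_right _ _)
      have hcM2 : -2⁻¹ ≤ cM := le_max_left _ _
      have hcM3 : cM ≤ 2⁻¹ := by
        apply max_le (by norm_num)
        exact Finset.sup'_le _ _ hmaxb
      have hcM4 : ∀ i ∈ s', cM ≤ R i := by
        intro i hi
        apply max_le (hminb i hi)
        exact Finset.sup'_le _ _ (fun i' hi' => hLR i' hi' i hi)
      set y := x - cM • v M with hy
      have hslaby : ∀ i ∈ s', |dt (v i) y| ≤ (∑ j ∈ s', |dt (v i) (v j)|) / 2 := by
        intro i hi
        have hSfi : Sf i = ∑ j ∈ s', |dt (v i) (v j)| := rfl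
        rw [hy, dt_sub_right, dt_smul_right, ← hSfi]
        have hL' : dt (v i) x - Sf i / 2 ≤ cM * dt (v i) (v M) := by
          have := hcM1 i hi
          rw [hL, div_le_iff₀ (hd i hi)] at this
          linarith
        have hR' : cM * dt (v i) (v M) ≤ dt (v i) x + Sf i / 2 := by
          have := hcM4 i hi
          rw [hR, le_div_iff₀ (hd i hi)] at this
          linarith
        rw [abs_le]
        constructor <;> linarith
      obtain ⟨c', hc', hy'⟩ := ih (n-1) (by omega) s' hcard' (by omega) v
        (fun i hi j hj hij => hord i (hsub' hi) j (hsub' hj) hij) y hslaby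
      refine ⟨Function.update c' M cM, ?_, ?_⟩
      · intro i hi
        rw [← hins] at hi
        rcases Finset.mem_insert.1 hi with rfl | hi
        · rw [Function.update_self, abs_le]; exact ⟨hcM2, hcM3⟩
        · rw [Function.update_of_ne (fun h => hMns' (by rwa [h] at hi))]
          exact hc' i hi
      · rw [← hins, Finset.sum_insert hMns', Function.update_self]
        have hsc : ∑ i ∈ s', Function.update c' M cM i • v i = ∑ i ∈ s', c' i • v i :=
          Finset.sum_congr rfl fun i hi => by
            rw [Function.update_of_ne (fun h => hMns' (by rwa [h] at hi))]
        rw [hsc, ← hy', hy]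
        module

lemma Zhard_gen (ε : ℝ) (hε : ε = 1 ∨ ε = -1) (s : Finset ℕ) (h2 : 2 ≤ s.card) (v : ℕ → V)
    (hord : ∀ i ∈ s, ∀ j ∈ s, i < j → 0 < ε * dt (v i) (v j)) (x : V)
    (hslab : ∀ i ∈ s, |dt (v i) x| ≤ (∑ j ∈ s, |dt (v i) (v j)|) / 2) :
    ∃ c : ℕ → ℝ, (∀ i ∈ s, |c i| ≤ 2⁻¹) ∧ x = ∑ i ∈ s, c i • v i := by
  rcases hε with rfl | rfl
  · exact Zhard s.card s rfl h2 v (fun i hi j hj hij => by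
      have := hord i hi j hj hij; linarith) x hslab
  · obtain ⟨c, hc, hx⟩ := Zhard s.card s rfl h2 (fun i => flip (v i))
      (fun i hi j hj hij => by
        have := hord i hi j hj hij
        rw [dt_flip]
        linarith) (flip x)
      (fun i hi => by
        rw [dt_flip, abs_neg]
        have hs : ∑ j ∈ s, |dt (flip (v i)) (flip (v j))| = ∑ j ∈ s, |dt (v i) (v j)| :=
          Finset.sum_congr rfl fun j _ => by rw [dt_flip, abs_neg]
        rw [hs]
        exact hslab i hi)
    refine ⟨c, hc, ?_⟩
    have h2' : flip x = flip (∑ i ∈ s, c i • v i) := by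
      rw [flip_sum]
      simp only [flip_smul]
      exact hx
    have := congrArg flip h2'
    rwa [flip_flip, flip_flip] at this

lemma zono_slab (l : ℕ) (u : ℕ → V) {F : Set V}
    (hF : F = ∑ i ∈ Finset.Icc 1 l, cseg2 (u i)) {x : V} (hx : x ∈ F) (j : ℕ) :
    |dt (u j) x| ≤ (∑ r ∈ Finset.Icc 1 l, |dt (u j) (u r)|) / 2 := by
  rw [hF, mem_zono_iff] at hx
  obtain ⟨c, hc, rfl⟩ := hx
  rw [dt_sum_right, Finset.sum_div]
  refine (Finset.abs_sum_le_sum_abs _ _).trans (Finset.sum_le_sum fun r hr => ?_)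
  rw [dt_smul_right, abs_mul]
  have h1 := hc r hr
  have h2 := abs_nonneg (dt (u j) (u r))
  nlinarith [abs_nonneg (c r)]

lemma sum_E_abs (l : ℕ) (u : ℕ → V) (a : V) :
    ∑ i ∈ Finset.Icc 1 (2*l), |dt a (if i ≤ l then u i else -u (i - l))|
      = 2 * ∑ r ∈ Finset.Icc 1 l, |dt a (u r)| := by
  have hsplit : Finset.Icc 1 (2*l) = Finset.Icc 1 l ∪ Finset.Icc (l+1) (2*l) := by
    ext m; simp only [Finset.mem_Icc, Finset.mem_union]; omega
  have hdisj : Disjoint (Finset.Icc 1 l) (Finset.Icc (l+1) (2*l)) := by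
    rw [Finset.disjoint_left]
    intro a ha hb
    simp only [Finset.mem_Icc] at ha hb
    omega
  rw [hsplit, Finset.sum_union hdisj]
  have h1 : ∑ i ∈ Finset.Icc 1 l, |dt a (if i ≤ l then u i else -u (i - l))|
      = ∑ r ∈ Finset.Icc 1 l, |dt a (u r)| :=
    Finset.sum_congr rfl fun i hi => by rw [if_pos (Finset.mem_Icc.1 hi).2]
  have h2 : ∑ i ∈ Finset.Icc (l+1) (2*l), |dt a (if i ≤ l then u i else -u (i - l))|
      = ∑ r ∈ Finset.Icc 1 l, |dt a (u r)| := by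
    have hmap : Finset.Icc (l+1) (2*l) = Finset.map (addLeftEmbedding l) (Finset.Icc 1 l) := by
      rw [Finset.map_add_left_Icc]
      congr 1
      omega
    rw [hmap, Finset.sum_map]
    refine Finset.sum_congr rfl fun r hr => ?_
    have hr' := Finset.mem_Icc.1 hr
    have he : addLeftEmbedding l r = l + r := rfl
    rw [he, if_neg (by omega), show l + r - l = r from by omega, dt_neg_right, abs_neg]
  rw [h1, h2]
  ring

lemma walk_locate (lh : ℕ) (hl : 2 ≤ lh) (b : ℕ → ℝ) (H : ℝ) (hH : 0 < H)
    (hclose : b (2*lh) = b 0) (hbd : ∀ m ≤ 2*lh, |b m| ≤ H)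
    (hvar : ∑ m ∈ Finset.range (2*lh), |b (m+1) - b m| = 4*H)
    (hnzero : ∀ m < 2*lh, m ≠ 0 → m ≠ lh → b (m+1) ≠ b m)
    (m1 m2 ν : ℕ) (h1 : m1 < 2*lh) (h2 : m2 < 2*lh) (hν : ν < 2*lh)
    (h12 : m1 < m2) (hb1 : b m1 = H) (hb2 : b m2 = H) (hbν : b ν = -H) :
    m2 = m1 + 1 ∧ (m1 = 0 ∨ m1 = lh) := by
  have hsum0 : ∑ m ∈ Finset.Ico m1 m2, (b (m+1) - b m) = 0 := by
    rw [tele b h12.le, hb1, hb2]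
    ring
  have key : ∀ m, m1 ≤ m → m < m2 → b (m+1) = b m := by
    rcases lt_trichotomy ν m1 with hc | hc | hc
    · obtain ⟨-, B⟩ := mono_walk_neg (2*lh) b H hclose hbd hvar ν m1 hc h1.le hbν hb1
      have hnp : ∀ m ∈ Finset.Ico m1 m2, b (m+1) - b m ≤ 0 := fun m hm => by
        have hm' := Finset.mem_Ico.1 hm
        exact B m (by omega) (Or.inr (by omega))
      intro m hm1 hm2
      have := (Finset.sum_eq_zero_iff_of_nonpos hnp).1 hsum0 m (Finset.mem_Ico.2 ⟨hm1, hm2⟩)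
      linarith
    · exfalso
      rw [hc, hb1] at hbν
      linarith
    · rcases lt_trichotomy ν m2 with hc2 | hc2 | hc2
      · exfalso
        obtain ⟨-, B1⟩ := mono_walk (2*lh) b H hclose hbd hvar m1 ν hc hν.le hb1 hbν
        obtain ⟨-, B2⟩ := mono_walk_neg (2*lh) b H hclose hbd hvar ν m2 hc2 h2.le hbν hb2
        have hz : ∀ m, m2 ≤ m → m < 2*lh → b (m+1) = b m := fun m hma hmb => by
          have hx1 := B1 m hmb (Or.inr (by omega))
          have hx2 := B2 m hmb (Or.inr hma)
          linarith
        have hmem : ∀ m, m2 ≤ m → m < 2*lh → m = lh := fun m hma hmb => by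
          by_contra hne
          exact hnzero m hmb (by omega) hne (hz m hma hmb)
        have e1 := hmem m2 le_rfl h2
        have e2 := hmem (2*lh - 1) (by omega) (by omega)
        omega
      · exfalso
        rw [hc2, hb2] at hbν
        linarith
      · obtain ⟨-, B⟩ := mono_walk (2*lh) b H hclose hbd hvar m2 ν hc2 hν.le hb2 hbν
        have hnn : ∀ m ∈ Finset.Ico m1 m2, 0 ≤ b (m+1) - b m := fun m hm => by
          have hm' := Finset.mem_Ico.1 hm
          exact B m (by omega) (Or.inl (by omega))
        intro m hm1 hm2
        have := (Finset.sum_eq_zero_iff_of_nonneg hnn).1 hsum0 m (Finset.mem_Ico.2 ⟨hm1, hm2⟩)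
        linarith
  have hzero : ∀ m, m1 ≤ m → m < m2 → (m = 0 ∨ m = lh) := by
    intro m hm1 hm2
    by_contra hc
    push_neg at hc
    exact hnzero m (by omega) hc.1 hc.2 (key m hm1 hm2)
  have h0 := hzero m1 le_rfl h12
  rcases Nat.lt_or_ge (m1+1) m2 with h | h
  · have h1' := hzero (m1+1) (by omega) h
    omega
  · exact ⟨by omega, h0⟩

lemma exists_extreme_pair (l : ℕ) (u : ℕ → V)
    (F : Set V) (hF : F = ∑ i ∈ Finset.Icc 1 l, cseg2 (u i))
    (q : ℕ → V) (hvert : F = convexHull ℝ (q '' Set.Icc 1 (2 * l)))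
    (j : ℕ) (hj : j ∈ Finset.Icc 1 l) (hujnz : u j ≠ 0) (sgn : ℝ) (hsgn : sgn = 1 ∨ sgn = -1) :
    ∃ γ1 ∈ Finset.Icc 1 (2*l), ∃ γ2 ∈ Finset.Icc 1 (2*l), γ1 ≠ γ2 ∧
      sgn * dt (u j) (q γ1) = (∑ r ∈ Finset.Icc 1 l, |dt (u j) (u r)|)/2 ∧
      sgn * dt (u j) (q γ2) = (∑ r ∈ Finset.Icc 1 l, |dt (u j) (u r)|)/2 := by
  classical
  set H := (∑ r ∈ Finset.Icc 1 l, |dt (u j) (u r)|)/2 with hH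
  set T := (Finset.Icc 1 (2*l)).image q with hT
  have hTcoe : (T : Set V) = q '' Set.Icc 1 (2*l) := by
    rw [hT, Finset.coe_image, Finset.coe_Icc]
  have hsgn1 : |sgn| = 1 := by rcases hsgn with rfl | rfl <;> norm_num
  set f : V →ₗ[ℝ] ℝ := sgn • dtL (u j) with hf
  have hfval : ∀ y, f y = sgn * dt (u j) y := fun y => by
    rw [hf, LinearMap.smul_apply, dtL_apply, smul_eq_mul]
  have hfT : ∀ y ∈ T, f y ≤ H := by
    intro y hy
    obtain ⟨γ, hγ, rfl⟩ := Finset.mem_image.1 hy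
    have hyF : q γ ∈ F := by
      rw [hvert]
      refine subset_convexHull ℝ _ ⟨γ, ?_, rfl⟩
      exact Set.mem_Icc.2 (Finset.mem_Icc.1 hγ)
    have hslab := zono_slab l u hF hyF j
    rw [hfval]
    calc sgn * dt (u j) (q γ) ≤ |sgn * dt (u j) (q γ)| := le_abs_self _
      _ = |dt (u j) (q γ)| := by rw [abs_mul, hsgn1, one_mul]
      _ ≤ H := hslab
  -- the two extreme points
  have hmem_p : ∀ sj : ℝ, |sj| ≤ 2⁻¹ → (∑ r ∈ Finset.Icc 1 l,
      (if r = j then sj else if 0 ≤ sgn * dt (u j) (u r) then 2⁻¹ else (-2⁻¹ : ℝ)) • u r) ∈ F := by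
    intro sj hsj
    rw [hF, mem_zono_iff]
    refine ⟨_, fun r hr => ?_, rfl⟩
    split_ifs with hh1 hh2
    · exact hsj
    · rw [abs_of_nonneg (by norm_num : (0:ℝ) ≤ 2⁻¹)]
    · rw [abs_of_nonpos (by norm_num : (-2⁻¹:ℝ) ≤ 0)]
      norm_num
  have hfp : ∀ sj : ℝ, f (∑ r ∈ Finset.Icc 1 l,
      (if r = j then sj else if 0 ≤ sgn * dt (u j) (u r) then 2⁻¹ else (-2⁻¹ : ℝ)) • u r) = H := by
    intro sj
    rw [hfval, dt_sum_right, Finset.mul_sum, hH, Finset.sum_div]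
    refine Finset.sum_congr rfl fun r hr => ?_
    rw [dt_smul_right]
    split_ifs with hh1 hh2
    · subst hh1
      rw [dt_self]
      simp
    · have habs : |dt (u j) (u r)| = sgn * dt (u j) (u r) := by
        calc |dt (u j) (u r)| = |sgn * dt (u j) (u r)| := by rw [abs_mul, hsgn1, one_mul]
          _ = sgn * dt (u j) (u r) := abs_of_nonneg hh2
      rw [habs]
      ring
    · have habs : |dt (u j) (u r)| = -(sgn * dt (u j) (u r)) := by
        calc |dt (u j) (u r)| = |sgn * dt (u j) (u r)| := by rw [abs_mul, hsgn1, one_mul]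
          _ = -(sgn * dt (u j) (u r)) := abs_of_neg (lt_of_not_ge hh2)
      rw [habs]
      ring
  have hp1F := hmem_p 2⁻¹ (by rw [abs_of_nonneg] <;> norm_num)
  have hp2F := hmem_p (-2⁻¹) (by rw [abs_neg, abs_of_nonneg] <;> norm_num)
  have hdiff : (∑ r ∈ Finset.Icc 1 l,
        (if r = j then (2⁻¹:ℝ) else if 0 ≤ sgn * dt (u j) (u r) then 2⁻¹ else (-2⁻¹ : ℝ)) • u r)
      - (∑ r ∈ Finset.Icc 1 l,
        (if r = j then (-2⁻¹:ℝ) else if 0 ≤ sgn * dt (u j) (u r) then 2⁻¹ else (-2⁻¹ : ℝ)) • u r)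
      = u j := by
    rw [← Finset.sum_sub_distrib]
    have hterm : ∀ r ∈ Finset.Icc 1 l,
        ((if r = j then (2⁻¹:ℝ) else if 0 ≤ sgn * dt (u j) (u r) then 2⁻¹ else (-2⁻¹ : ℝ)) • u r
          - (if r = j then (-2⁻¹:ℝ) else if 0 ≤ sgn * dt (u j) (u r) then 2⁻¹ else (-2⁻¹ : ℝ)) • u r)
        = if r = j then u r else 0 := by
      intro r hr
      split_ifs with hh
      · module
      all_goals rw [sub_self]
    rw [Finset.sum_congr rfl hterm, Finset.sum_ite_eq' (Finset.Icc 1 l) j (fun r => u r), if_pos hj]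
  have hne12 : (∑ r ∈ Finset.Icc 1 l,
        (if r = j then (2⁻¹:ℝ) else if 0 ≤ sgn * dt (u j) (u r) then 2⁻¹ else (-2⁻¹ : ℝ)) • u r)
      ≠ (∑ r ∈ Finset.Icc 1 l,
        (if r = j then (-2⁻¹:ℝ) else if 0 ≤ sgn * dt (u j) (u r) then 2⁻¹ else (-2⁻¹ : ℝ)) • u r) := by
    intro hcon
    rw [hcon, sub_self] at hdiff
    exact hujnz hdiff.symm
  have hhull : ∀ z ∈ F, z ∈ convexHull ℝ (T : Set V) := by
    intro z hz
    rw [hTcoe, ← hvert]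
    exact hz
  obtain ⟨y1, hy1T, y2, hy2T, hy12, hfy1, hfy2⟩ :=
    two_max f hfT (hhull _ hp1F) (hhull _ hp2F) (hfp 2⁻¹) (hfp (-2⁻¹)) hne12
  obtain ⟨γ1, hγ1, rfl⟩ := Finset.mem_image.1 hy1T
  obtain ⟨γ2, hγ2, rfl⟩ := Finset.mem_image.1 hy2T
  refine ⟨γ1, hγ1, γ2, hγ2, fun hcon => hy12 (by rw [hcon]), ?_, ?_⟩
  · rw [← hfval]; exact hfy1
  · rw [← hfval]; exact hfy2

def wrp (l j m : ℕ) : ℕ := if j + m ≤ 2*l then j + m else j + m - 2*l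

noncomputable def bw (u q : ℕ → V) (l j m : ℕ) : ℝ := dt (u j) (q (wrp l j m))

lemma orient (l : ℕ) (hl2 : 2 ≤ l) (u : ℕ → V)
    (hnz : ∀ i ∈ Finset.Icc 1 l, u i ≠ 0)
    (dtnz : ∀ i ∈ Finset.Icc 1 l, ∀ j ∈ Finset.Icc 1 l, i ≠ j → dt (u i) (u j) ≠ 0)
    (F : Set V) (hF : F = ∑ i ∈ Finset.Icc 1 l, cseg2 (u i))
    (q : ℕ → V) (hvert : F = convexHull ℝ (q '' Set.Icc 1 (2 * l)))
    (hchain : ∀ i ∈ Finset.Icc 1 (2 * l),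
      q (i + 1) = q i + (if i ≤ l then u i else -u (i - l))) :
    (∀ i ∈ Finset.Icc 1 l, ∀ j ∈ Finset.Icc 1 l, i < j → dt (u i) (u j) < 0) ∨
    (∀ i ∈ Finset.Icc 1 l, ∀ j ∈ Finset.Icc 1 l, i < j → 0 < dt (u i) (u j)) := by
  classical
  have tele_q : ∀ r, 1 ≤ r → r ≤ 2*l + 1 →
      q r = q 1 + ∑ i ∈ Finset.Ico 1 r, (if i ≤ l then u i else -u (i - l)) := by
    intro r
    induction r with
    | zero => intro h1 _; exact absurd h1 (by omega)
    | succ r ihr =>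
      intro h1 h2
      rcases Nat.eq_or_lt_of_le h1 with heq | hlt
      · have hr0 : r = 0 := by omega
        subst hr0
        simp
      · have hr1 : 1 ≤ r := by omega
        have hr2 : r ≤ 2*l := by omega
        rw [Finset.sum_Ico_succ_top hr1, ← add_assoc, ← ihr hr1 (by omega)]
        exact hchain r (Finset.mem_Icc.2 ⟨hr1, hr2⟩)
  have hEsum : ∑ i ∈ Finset.Ico 1 (2*l+1), (if i ≤ l then u i else -u (i - l)) = 0 := by
    have hsplit : Finset.Ico 1 (2*l+1) = Finset.Icc 1 l ∪ Finset.Icc (l+1) (2*l) := by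
      ext m
      simp only [Finset.mem_Ico, Finset.mem_Icc, Finset.mem_union]
      omega
    have hdisj : Disjoint (Finset.Icc 1 l) (Finset.Icc (l+1) (2*l)) := by
      rw [Finset.disjoint_left]
      intro a ha hb
      simp only [Finset.mem_Icc] at ha hb
      omega
    rw [hsplit, Finset.sum_union hdisj]
    have h1 : ∑ i ∈ Finset.Icc 1 l, (if i ≤ l then u i else -u (i - l))
        = ∑ r ∈ Finset.Icc 1 l, u r :=
      Finset.sum_congr rfl fun i hi => if_pos (Finset.mem_Icc.1 hi).2
    have h2 : ∑ i ∈ Finset.Icc (l+1) (2*l), (if i ≤ l then u i else -u (i - l))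
        = -∑ r ∈ Finset.Icc 1 l, u r := by
      have hmap : Finset.Icc (l+1) (2*l) = Finset.map (addLeftEmbedding l) (Finset.Icc 1 l) := by
        rw [Finset.map_add_left_Icc]
        congr 1
        omega
      rw [hmap, Finset.sum_map, ← Finset.sum_neg_distrib]
      refine Finset.sum_congr rfl fun r hr => ?_
      have hr' := Finset.mem_Icc.1 hr
      have he : addLeftEmbedding l r = l + r := rfl
      rw [he, if_neg (by omega), show l + r - l = r from by omega]
    rw [h1, h2, add_neg_cancel]
  have hq1 : q (2*l+1) = q 1 := by
    rw [tele_q (2*l+1) (by omega) le_rfl, hEsum, add_zero]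
  have KEY : ∀ j ∈ Finset.Icc 1 l,
      (∀ i ∈ Finset.Icc 1 l, (j < i → dt (u j) (u i) < 0) ∧ (i < j → 0 < dt (u j) (u i))) ∨
      (∀ i ∈ Finset.Icc 1 l, (j < i → 0 < dt (u j) (u i)) ∧ (i < j → dt (u j) (u i) < 0)) := by
    intro j hj
    obtain ⟨hj1, hjl⟩ := Finset.mem_Icc.1 hj
    set H := (∑ r ∈ Finset.Icc 1 l, |dt (u j) (u r)|)/2 with hHd
    have hH : 0 < H := by
      have hr0m : (if j = 1 then 2 else 1) ∈ Finset.Icc 1 l := by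
        split_ifs <;> (rw [Finset.mem_Icc]; omega)
      have hr0j : (if j = 1 then 2 else 1) ≠ j := by split_ifs with h <;> omega
      have hpos : 0 < |dt (u j) (u (if j = 1 then 2 else 1))| :=
        abs_pos.2 (dtnz j hj _ hr0m (fun h => hr0j h.symm))
      have hle := Finset.single_le_sum (f := fun r => |dt (u j) (u r)|)
        (fun r _ => abs_nonneg _) hr0m
      rw [hHd]
      linarith
    have hwrb : ∀ m, m ≤ 2*l → 1 ≤ wrp l j m ∧ wrp l j m ≤ 2*l := by
      intro m hm
      unfold wrp
      split_ifs <;> omega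
    have hbF : ∀ m, m ≤ 2*l → q (wrp l j m) ∈ F := by
      intro m hm
      rw [hvert]
      refine subset_convexHull ℝ _ ⟨wrp l j m, ?_, rfl⟩
      exact Set.mem_Icc.2 (hwrb m hm)
    have hbd : ∀ m, m ≤ 2*l → |bw u q l j m| ≤ H := by
      intro m hm
      rw [hHd]
      exact zono_slab l u hF (hbF m hm) j
    have hclose : bw u q l j (2*l) = bw u q l j 0 := by
      unfold bw wrp
      rw [if_neg (by omega), if_pos (by omega), show j + 2*l - 2*l = j from by omega,
        show j + 0 = j from by omega]
    have hstep : ∀ m, m < 2*l → bw u q l j (m+1) = bw u q l j m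
        + dt (u j) (if wrp l j m ≤ l then u (wrp l j m) else -u (wrp l j m - l)) := by
      intro m hm
      have hcase : (j + m + 1 ≤ 2*l) ∨ (j + m = 2*l) ∨ (2*l < j + m) := by omega
      rcases hcase with h | h | h
      · have e1 : wrp l j (m+1) = (j+m) + 1 := by
          unfold wrp
          rw [if_pos (by omega)]
          omega
        have e2 : wrp l j m = j + m := by
          unfold wrp
          rw [if_pos (by omega)]
        unfold bw
        rw [e1, e2, hchain (j+m) (Finset.mem_Icc.2 ⟨by omega, by omega⟩), dt_add_right]
      · have e1 : wrp l j (m+1) = 1 := by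
          unfold wrp
          rw [if_neg (by omega)]
          omega
        have e2 : wrp l j m = 2*l := by
          unfold wrp
          rw [if_pos (by omega)]
          omega
        unfold bw
        rw [e1, e2, ← hq1, hchain (2*l) (Finset.mem_Icc.2 ⟨by omega, le_rfl⟩), dt_add_right]
      · have e1 : wrp l j (m+1) = (j + m - 2*l) + 1 := by
          unfold wrp
          rw [if_neg (by omega)]
          omega
        have e2 : wrp l j m = j + m - 2*l := by
          unfold wrp
          rw [if_neg (by omega)]
        unfold bw
        rw [e1, e2, hchain (j+m-2*l) (Finset.mem_Icc.2 ⟨by omega, by omega⟩), dt_add_right]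
    have hvar : ∑ m ∈ Finset.range (2*l), |bw u q l j (m+1) - bw u q l j m| = 4*H := by
      have hterm : ∀ m ∈ Finset.range (2*l), |bw u q l j (m+1) - bw u q l j m|
          = |dt (u j) (if wrp l j m ≤ l then u (wrp l j m) else -u (wrp l j m - l))| := by
        intro m hm
        rw [hstep m (Finset.mem_range.1 hm), add_sub_cancel_left]
      rw [Finset.sum_congr rfl hterm]
      have hbij : ∑ m ∈ Finset.range (2*l),
          |dt (u j) (if wrp l j m ≤ l then u (wrp l j m) else -u (wrp l j m - l))|
          = ∑ i ∈ Finset.Icc 1 (2*l), |dt (u j) (if i ≤ l then u i else -u (i - l))| := by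
        refine Finset.sum_nbij' (fun m => wrp l j m)
          (fun γ => if j ≤ γ then γ - j else γ + 2*l - j) ?_ ?_ ?_ ?_ ?_
        · intro m hm
          rw [Finset.mem_Icc]
          exact hwrb m (le_of_lt (Finset.mem_range.1 hm))
        · intro γ hγ
          rw [Finset.mem_range]
          have := Finset.mem_Icc.1 hγ
          beta_reduce
          split_ifs <;> omega
        · intro m hm
          have := Finset.mem_range.1 hm
          beta_reduce
          unfold wrp
          split_ifs <;> omega
        · intro γ hγ
          have := Finset.mem_Icc.1 hγ
          beta_reduce
          unfold wrp
          split_ifs <;> omega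
        · intro m hm
          rfl
      rw [hbij, sum_E_abs, hHd]
      ring
    have hnzero : ∀ m, m < 2*l → m ≠ 0 → m ≠ l → bw u q l j (m+1) ≠ bw u q l j m := by
      intro m hm hm0 hml hcon
      have hst := hstep m hm
      rw [hcon] at hst
      have hd0 : dt (u j) (if wrp l j m ≤ l then u (wrp l j m) else -u (wrp l j m - l)) = 0 := by
        linarith
      have hwr := hwrb m (le_of_lt hm)
      by_cases hc : wrp l j m ≤ l
      · rw [if_pos hc] at hd0
        have hne : wrp l j m ≠ j := by
          unfold wrp
          split_ifs <;> omega
        exact dtnz j hj (wrp l j m) (Finset.mem_Icc.2 ⟨hwr.1, hc⟩) (fun h => hne h.symm) hd0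
      · rw [if_neg hc, dt_neg_right, neg_eq_zero] at hd0
        have hb1 : 1 ≤ wrp l j m - l := by omega
        have hb2 : wrp l j m - l ≤ l := by omega
        have hne : wrp l j m - l ≠ j := by
          unfold wrp
          split_ifs <;> omega
        exact dtnz j hj _ (Finset.mem_Icc.2 ⟨hb1, hb2⟩) (fun h => hne h.symm) hd0
    obtain ⟨γ1, hγ1, γ2, hγ2, hγne, hv1, hv2⟩ :=
      exists_extreme_pair l u F hF q hvert j hj (hnz j hj) 1 (Or.inl rfl)
    obtain ⟨δ1, hδ1, δ2, hδ2, hδne, hw1, hw2⟩ :=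
      exists_extreme_pair l u F hF q hvert j hj (hnz j hj) (-1) (Or.inr rfl)
    have hm_of_γ : ∀ γ, γ ∈ Finset.Icc 1 (2*l) → ∃ m, m < 2*l ∧ wrp l j m = γ := by
      intro γ hγ
      have := Finset.mem_Icc.1 hγ
      refine ⟨if j ≤ γ then γ - j else γ + 2*l - j, ?_, ?_⟩
      · split_ifs <;> omega
      · unfold wrp
        split_ifs <;> omega
    obtain ⟨a1, ha1, he1⟩ := hm_of_γ γ1 hγ1
    obtain ⟨a2, ha2, he2⟩ := hm_of_γ γ2 hγ2
    obtain ⟨a3, ha3, he3⟩ := hm_of_γ δ1 hδ1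
    obtain ⟨a4, ha4, he4⟩ := hm_of_γ δ2 hδ2
    have hb1 : bw u q l j a1 = H := by
      unfold bw
      rw [he1, hHd]
      linarith [hv1]
    have hb2 : bw u q l j a2 = H := by
      unfold bw
      rw [he2, hHd]
      linarith [hv2]
    have hb3 : bw u q l j a3 = -H := by
      unfold bw
      rw [he3, hHd]
      linarith [hw1]
    have hb4 : bw u q l j a4 = -H := by
      unfold bw
      rw [he4, hHd]
      linarith [hw2]
    have ha12 : a1 ≠ a2 := fun h => hγne (by rw [← he1, ← he2, h])
    have ha34 : a3 ≠ a4 := fun h => hδne (by rw [← he3, ← he4, h])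
    have hmaxpair : ∃ mm, mm < 2*l ∧ (mm = 0 ∨ mm = l) ∧
        bw u q l j mm = H ∧ bw u q l j (mm+1) = H := by
      rcases lt_trichotomy a1 a2 with h | h | h
      · obtain ⟨hee, hmm⟩ := walk_locate l hl2 (bw u q l j) H hH hclose hbd hvar hnzero
          a1 a2 a3 ha1 ha2 ha3 h hb1 hb2 hb3
        exact ⟨a1, ha1, hmm, hb1, by rw [← hee]; exact hb2⟩
      · exact absurd h ha12
      · obtain ⟨hee, hmm⟩ := walk_locate l hl2 (bw u q l j) H hH hclose hbd hvar hnzero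
          a2 a1 a3 ha2 ha1 ha3 h hb2 hb1 hb3
        exact ⟨a2, ha2, hmm, hb2, by rw [← hee]; exact hb1⟩
    have hminpair : ∃ nn, nn < 2*l ∧ (nn = 0 ∨ nn = l) ∧
        bw u q l j nn = -H ∧ bw u q l j (nn+1) = -H := by
      have hclose' : (fun m => -bw u q l j m) (2*l) = (fun m => -bw u q l j m) 0 := by
        simp [hclose]
      have hbd' : ∀ m, m ≤ 2*l → |(fun m => -bw u q l j m) m| ≤ H := fun m hm => by
        simpa using hbd m hm
      have hvar' : ∑ m ∈ Finset.range (2*l),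
          |(fun m => -bw u q l j m) (m+1) - (fun m => -bw u q l j m) m| = 4*H := by
        rw [← hvar]
        refine Finset.sum_congr rfl fun m _ => ?_
        simp only
        rw [← abs_neg]
        congr 1
        ring
      have hnzero' : ∀ m, m < 2*l → m ≠ 0 → m ≠ l →
          (fun m => -bw u q l j m) (m+1) ≠ (fun m => -bw u q l j m) m := by
        intro m h1 h2 h3 hcon
        simp only [neg_inj] at hcon
        exact hnzero m h1 h2 h3 hcon
      have hc3 : (fun m => -bw u q l j m) a3 = H := by simp [hb3]
      have hc4 : (fun m => -bw u q l j m) a4 = H := by simp [hb4]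
      have hc1 : (fun m => -bw u q l j m) a1 = -H := by simp [hb1]
      rcases lt_trichotomy a3 a4 with h | h | h
      · obtain ⟨hee, hmm⟩ := walk_locate l hl2 (fun m => -bw u q l j m) H hH hclose' hbd' hvar'
          hnzero' a3 a4 a1 ha3 ha4 ha1 h hc3 hc4 hc1
        refine ⟨a3, ha3, hmm, hb3, ?_⟩
        have := hc4
        rw [hee] at this
        simp only at this
        linarith
      · exact absurd h ha34
      · obtain ⟨hee, hmm⟩ := walk_locate l hl2 (fun m => -bw u q l j m) H hH hclose' hbd' hvar'
          hnzero' a4 a3 a1 ha4 ha3 ha1 h hc4 hc3 hc1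
        refine ⟨a4, ha4, hmm, hb4, ?_⟩
        have := hc3
        rw [hee] at this
        simp only at this
        linarith
    obtain ⟨mm, hmml, hmm0l, hmmv, hmmv'⟩ := hmaxpair
    obtain ⟨nn, hnnl, hnn0l, hnnv, hnnv'⟩ := hminpair
    have hmn : mm ≠ nn := fun h => by
      rw [h, hnnv] at hmmv
      linarith
    rcases hmm0l with hmm0 | hmmL
    · -- mm = 0, nn = l : case A
      have hnnL : nn = l := by
        rcases hnn0l with h | h
        · exact absurd (by omega : mm = nn) hmn
        · exact h
      rw [hmm0] at hmmv'
      rw [hnnL] at hnnv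
      obtain ⟨A, -⟩ := mono_walk (2*l) (bw u q l j) H hclose hbd hvar 1 l (by omega) (by omega)
        hmmv' hnnv
      refine Or.inl fun i hi => ?_
      obtain ⟨hi1, hil⟩ := Finset.mem_Icc.1 hi
      constructor
      · intro hji
        have hstepv := hstep (i - j) (by omega)
        have hwrpv : wrp l j (i - j) = i := by
          unfold wrp
          rw [if_pos (by omega)]
          omega
        rw [hwrpv, if_pos hil] at hstepv
        have hle := A (i-j) (by omega) (by omega)
        have hne := hnzero (i-j) (by omega) (by omega) (by omega)
        rcases lt_or_eq_of_le hle with hlt | heq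
        · linarith [hstepv]
        · exfalso
          apply hne
          linarith [hstepv]
      · intro hij
        have hstepv := hstep (l + i - j) (by omega)
        have hwrpv : wrp l j (l + i - j) = l + i := by
          unfold wrp
          rw [if_pos (by omega)]
          omega
        rw [hwrpv, if_neg (by omega), show l + i - l = i from by omega, dt_neg_right] at hstepv
        have hle := A (l+i-j) (by omega) (by omega)
        have hne := hnzero (l+i-j) (by omega) (by omega) (by omega)
        rcases lt_or_eq_of_le hle with hlt | heq
        · linarith [hstepv]
        · exfalso
          apply hne
          linarith [hstepv]
    · -- mm = l, nn = 0 : case B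
      have hnn0 : nn = 0 := by
        rcases hnn0l with h | h
        · exact h
        · exact absurd (by omega : mm = nn) hmn
      rw [hnn0] at hnnv'
      rw [hmmL] at hmmv
      obtain ⟨A, -⟩ := mono_walk_neg (2*l) (bw u q l j) H hclose hbd hvar 1 l (by omega)
        (by omega) hnnv' hmmv
      refine Or.inr fun i hi => ?_
      obtain ⟨hi1, hil⟩ := Finset.mem_Icc.1 hi
      constructor
      · intro hji
        have hstepv := hstep (i - j) (by omega)
        have hwrpv : wrp l j (i - j) = i := by
          unfold wrp
          rw [if_pos (by omega)]
          omega
        rw [hwrpv, if_pos hil] at hstepv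
        have hle := A (i-j) (by omega) (by omega)
        have hne := hnzero (i-j) (by omega) (by omega) (by omega)
        rcases lt_or_eq_of_le hle with hlt | heq
        · linarith [hstepv]
        · exfalso
          apply hne
          linarith [hstepv]
      · intro hij
        have hstepv := hstep (l + i - j) (by omega)
        have hwrpv : wrp l j (l + i - j) = l + i := by
          unfold wrp
          rw [if_pos (by omega)]
          omega
        rw [hwrpv, if_neg (by omega), show l + i - l = i from by omega, dt_neg_right] at hstepv
        have hle := A (l+i-j) (by omega) (by omega)
        have hne := hnzero (l+i-j) (by omega) (by omega) (by omega)
        rcases lt_or_eq_of_le hle with hlt | heq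
        · linarith [hstepv]
        · exfalso
          apply hne
          linarith [hstepv]
  have h1l : (1:ℕ) ∈ Finset.Icc 1 l := Finset.mem_Icc.2 ⟨le_rfl, by omega⟩
  rcases KEY 1 h1l with hA1 | hB1
  · left
    intro i hi j' hj' hij
    rcases KEY i hi with hAi | hBi
    · exact (hAi j' hj').1 hij
    · exfalso
      have hipos := (hBi j' hj').1 hij
      obtain ⟨hi1, hil⟩ := Finset.mem_Icc.1 hi
      rcases Nat.eq_or_lt_of_le hi1 with h1i | h1i
      · have hx := (hA1 j' hj').1 (by omega)
        rw [← h1i] at hipos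
        linarith
      · have hx1 := (hA1 i hi).1 h1i
        have hx2 := (hBi 1 h1l).2 h1i
        rw [dt_anti] at hx2
        linarith
  · right
    intro i hi j' hj' hij
    rcases KEY i hi with hAi | hBi
    · exfalso
      have hineg := (hAi j' hj').1 hij
      obtain ⟨hi1, hil⟩ := Finset.mem_Icc.1 hi
      rcases Nat.eq_or_lt_of_le hi1 with h1i | h1i
      · have hx := (hB1 j' hj').1 (by omega)
        rw [← h1i] at hineg
        linarith
      · have hx1 := (hB1 i hi).1 h1i
        have hx2 := (hAi 1 h1l).2 h1i
        rw [dt_anti] at hx2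
        linarith
    · exact (hBi j' hj').1 hij

lemma sum_split4 {M : Type*} [AddCommMonoid M] {k l : ℕ} (hk2 : 2 ≤ k) (hkl : k ≤ l)
    (f : ℕ → M) :
    ∑ i ∈ Finset.Icc 1 l, f i
      = f 1 + (∑ i ∈ Finset.Icc 2 (k-1), f i + (f k + ∑ i ∈ Finset.Icc (k+1) l, f i)) := by
  have h1 : Finset.Icc 1 l = insert 1 (Finset.Icc 2 (k-1) ∪ insert k (Finset.Icc (k+1) l)) := by
    ext m
    simp only [Finset.mem_insert, Finset.mem_union, Finset.mem_Icc]
    omega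
  have hd1 : (1:ℕ) ∉ Finset.Icc 2 (k-1) ∪ insert k (Finset.Icc (k+1) l) := by
    simp only [Finset.mem_union, Finset.mem_insert, Finset.mem_Icc]
    omega
  have hd2 : Disjoint (Finset.Icc 2 (k-1)) (insert k (Finset.Icc (k+1) l)) := by
    rw [Finset.disjoint_left]
    intro a ha hb
    simp only [Finset.mem_Icc] at ha
    simp only [Finset.mem_insert, Finset.mem_Icc] at hb
    omega
  have hd3 : k ∉ Finset.Icc (k+1) l := by
    simp only [Finset.mem_Icc]
    omega
  rw [h1, Finset.sum_insert hd1, Finset.sum_union hd2, Finset.sum_insert hd3]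

end HSYZ

open HSYZ

set_option maxHeartbeats 2000000 in
/-- Corollary 4.3 (Han–Sriamorn–Yang–Zong): for a centrally symmetric convex polygon
`F = T₁ + ⋯ + T_l` centered at the origin with edges `M₁, …, M_{2l}` in circular order
(edge vectors `u 1, …, u l, -u 1, …, -u l`), and
`t = Σ_{i=2}^{k-1} u i + λ_k • u k + λ₁ • u 1` with `2 ≤ k ≤ l`, `0 ≤ λ_k ≤ 1`,
`0 ≤ λ₁ < 1`, we have `F ∩ (F + t) = F* + t/2` where
`F* = (1-λ₁)T₁ + (1-λ_k)T_k + T_{k+1} + ⋯ + T_l`. -/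
theorem polygon_inter_translate (l : ℕ) (hl : 1 ≤ l) (u : ℕ → (Fin 2 → ℝ))
    (hnz : ∀ i ∈ Finset.Icc 1 l, u i ≠ 0)
    (hpair : ∀ i ∈ Finset.Icc 1 l, ∀ j ∈ Finset.Icc 1 l, i ≠ j →
      ∀ a b : ℝ, a • u i + b • u j = 0 → a = 0 ∧ b = 0)
    (F : Set (Fin 2 → ℝ)) (hF : F = ∑ i ∈ Finset.Icc 1 l, cseg2 (u i))
    (q : ℕ → (Fin 2 → ℝ))
    (hvert : F = convexHull ℝ (q '' Set.Icc 1 (2 * l)))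
    (hchain : ∀ i ∈ Finset.Icc 1 (2 * l),
      q (i + 1) = q i + (if i ≤ l then u i else -u (i - l)))
    (k : ℕ) (hk2 : 2 ≤ k) (hkl : k ≤ l)
    (lam1 lamk : ℝ) (h10 : 0 ≤ lam1) (h11 : lam1 < 1) (hk0 : 0 ≤ lamk) (hk1 : lamk ≤ 1)
    (t : Fin 2 → ℝ)
    (ht : t = (∑ i ∈ Finset.Icc 2 (k - 1), u i) + lamk • u k + lam1 • u 1) :
    F ∩ ((fun y => y + t) '' F) =
      (fun y => y + (2 : ℝ)⁻¹ • t) ''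
        (cseg2 ((1 - lam1) • u 1) + cseg2 ((1 - lamk) • u k) +
          ∑ i ∈ Finset.Icc (k + 1) l, cseg2 (u i)) := by
  classical
  have hl2 : 2 ≤ l := le_trans hk2 hkl
  have dtnz : ∀ i ∈ Finset.Icc 1 l, ∀ j ∈ Finset.Icc 1 l, i ≠ j → dt (u i) (u j) ≠ 0 := by
    intro i hi j hj hij hdt
    obtain ⟨c, hc⟩ := collinear_of_dt_eq_zero hdt (hnz i hi)
    have := hpair i hi j hj hij c (-1) (by rw [hc]; module)
    exact absurd this.2 (by norm_num)
  obtain ⟨ε, hεpm, hord⟩ : ∃ ε : ℝ, (ε = 1 ∨ ε = -1) ∧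
      ∀ i ∈ Finset.Icc 1 l, ∀ j ∈ Finset.Icc 1 l, i < j → 0 < ε * dt (u i) (u j) := by
    rcases orient l hl2 u hnz dtnz F hF q hvert hchain with h | h
    · exact ⟨-1, Or.inr rfl, fun i hi j hj hij => by linarith [h i hi j hj hij]⟩
    · exact ⟨1, Or.inl rfl, fun i hi j hj hij => by linarith [h i hi j hj hij]⟩
  have hone : |ε| = 1 := by rcases hεpm with rfl | rfl <;> norm_num
  have h1m : (1:ℕ) ∈ Finset.Icc 1 l := Finset.mem_Icc.2 ⟨le_rfl, by omega⟩
  have hkm : k ∈ Finset.Icc 1 l := Finset.mem_Icc.2 ⟨by omega, hkl⟩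
  ext x
  simp only [Set.mem_inter_iff, Set.mem_image]
  constructor
  · rintro ⟨hxF, w, hwF, hwx⟩
    have hw' : w = x - t := by rw [← hwx]; abel
    have hsx : ∀ i ∈ Finset.Icc 1 l, |dt (u i) x|
        ≤ (∑ r ∈ Finset.Icc 1 l, |dt (u i) (u r)|)/2 := fun i _ => zono_slab l u hF hxF i
    have hsw : ∀ i ∈ Finset.Icc 1 l, |dt (u i) w|
        ≤ (∑ r ∈ Finset.Icc 1 l, |dt (u i) (u r)|)/2 := fun i _ => zono_slab l u hF hwF i
    have hkey : ∀ i ∈ Finset.Icc 1 l, |dt (u i) (x - (2:ℝ)⁻¹ • t)|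
        ≤ (∑ r ∈ Finset.Icc 1 l, |dt (u i) (u r)|)/2 - |dt (u i) t|/2 := by
      intro i hi
      have h1 := abs_le.1 (hsx i hi)
      have h2' := hsw i hi
      rw [hw', dt_sub_right] at h2'
      have h2 := abs_le.1 h2'
      rw [dt_sub_right, dt_smul_right, abs_le]
      rcases abs_cases (dt (u i) t) with ⟨he, hseg⟩ | ⟨he, hseg⟩ <;> rw [he] <;>
        exact ⟨by linarith [h1.1, h1.2, h2.1, h2.2], by linarith [h1.1, h1.2, h2.1, h2.2]⟩
    have habs_t : ∀ i ∈ Finset.Icc 1 l, (k ≤ i ∨ i = 1) →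
        |dt (u i) t| = ∑ r ∈ Finset.Icc 2 (k-1), |dt (u i) (u r)|
          + lamk * |dt (u i) (u k)| + lam1 * |dt (u i) (u 1)| := by
      intro i hi hcase
      obtain ⟨hi1, hil⟩ := Finset.mem_Icc.1 hi
      have ht' : dt (u i) t = (∑ r ∈ Finset.Icc 2 (k-1), dt (u i) (u r))
          + lamk * dt (u i) (u k) + lam1 * dt (u i) (u 1) := by
        rw [ht, dt_add_right, dt_add_right, dt_sum_right, dt_smul_right, dt_smul_right]
      have hnn : 0 ≤ ∑ r ∈ Finset.Icc 2 (k-1), |dt (u i) (u r)|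
          + lamk * |dt (u i) (u k)| + lam1 * |dt (u i) (u 1)| := by
        have hs := Finset.sum_nonneg (s := Finset.Icc 2 (k-1))
          (f := fun r => |dt (u i) (u r)|) (fun r _ => abs_nonneg _)
        have h2 := mul_nonneg hk0 (abs_nonneg (dt (u i) (u k)))
        have h3 := mul_nonneg h10 (abs_nonneg (dt (u i) (u 1)))
        linarith
      rcases hcase with hki | hieq
      · have hsgn : ∀ r, 1 ≤ r → r ≤ k → ε * dt (u i) (u r) = -|dt (u i) (u r)| := by
          intro r h1r hrk
          rcases eq_or_ne r i with rfl | hri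
          · rw [dt_self, abs_zero]
            ring
          · have hrm : r ∈ Finset.Icc 1 l := Finset.mem_Icc.2 ⟨h1r, le_trans hrk hkl⟩
            have hlt : r < i := by omega
            have hp := hord r hrm i hi hlt
            have hneg : ε * dt (u i) (u r) < 0 := by
              rw [dt_anti]
              have hq : ε * -dt (u r) (u i) = -(ε * dt (u r) (u i)) := by ring
              rw [hq]
              linarith
            rw [show |dt (u i) (u r)| = |ε * dt (u i) (u r)| from by
              rw [abs_mul, hone, one_mul], abs_of_neg hneg, neg_neg]
        have hmain : ε * dt (u i) t = -(∑ r ∈ Finset.Icc 2 (k-1), |dt (u i) (u r)|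
            + lamk * |dt (u i) (u k)| + lam1 * |dt (u i) (u 1)|) := by
          rw [ht', mul_add, mul_add, Finset.mul_sum]
          rw [Finset.sum_congr rfl (fun r hr => by
            have := Finset.mem_Icc.1 hr
            exact hsgn r (by omega) (by omega))]
          rw [show ε * (lamk * dt (u i) (u k)) = lamk * (ε * dt (u i) (u k)) from by ring,
            hsgn k (by omega) le_rfl,
            show ε * (lam1 * dt (u i) (u 1)) = lam1 * (ε * dt (u i) (u 1)) from by ring,
            hsgn 1 (by omega) (by omega), Finset.sum_neg_distrib]
          ring
        calc |dt (u i) t| = |ε * dt (u i) t| := by rw [abs_mul, hone, one_mul]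
          _ = _ := by rw [hmain, abs_neg, abs_of_nonneg hnn]
      · subst hieq
        have hsgn : ∀ r, 2 ≤ r → r ≤ k → ε * dt (u 1) (u r) = |dt (u 1) (u r)| := by
          intro r h2r hrk
          have hrm : r ∈ Finset.Icc 1 l := Finset.mem_Icc.2 ⟨by omega, le_trans hrk hkl⟩
          have hp := hord 1 hi r hrm (by omega)
          rw [show |dt (u 1) (u r)| = |ε * dt (u 1) (u r)| from by
            rw [abs_mul, hone, one_mul], abs_of_pos hp]
        have hmain : ε * dt (u 1) t = ∑ r ∈ Finset.Icc 2 (k-1), |dt (u 1) (u r)|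
            + lamk * |dt (u 1) (u k)| + lam1 * |dt (u 1) (u 1)| := by
          rw [ht', mul_add, mul_add, Finset.mul_sum]
          rw [Finset.sum_congr rfl (fun r hr => by
            have := Finset.mem_Icc.1 hr
            exact hsgn r (by omega) (by omega))]
          rw [show ε * (lamk * dt (u 1) (u k)) = lamk * (ε * dt (u 1) (u k)) from by ring,
            hsgn k (by omega) le_rfl, dt_self, abs_zero]
          ring
        calc |dt (u 1) t| = |ε * dt (u 1) t| := by rw [abs_mul, hone, one_mul]
          _ = _ := by rw [hmain]; exact abs_of_nonneg hnn
    have hwidth : ∀ i ∈ Finset.Icc 1 l, (k ≤ i ∨ i = 1) →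
        |dt (u i) (x - (2:ℝ)⁻¹ • t)|
          ≤ ((1-lam1) * |dt (u i) (u 1)| + (1-lamk) * |dt (u i) (u k)|
            + ∑ r ∈ Finset.Icc (k+1) l, |dt (u i) (u r)|)/2 := by
      intro i hi hcase
      have h := hkey i hi
      rw [habs_t i hi hcase, sum_split4 hk2 hkl (fun r => |dt (u i) (u r)|)] at h
      linarith [h]
    refine ⟨x - (2:ℝ)⁻¹ • t, ?_, by abel⟩
    by_cases hlk1 : lamk < 1
    · -- λk < 1 : full zonotope case
      set cf : ℕ → ℝ := fun i => if i = 1 then 1-lam1 else if i = k then 1-lamk else 1 with hcf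
      have hcf1 : cf 1 = 1 - lam1 := by simp [hcf]
      have hcfk : cf k = 1 - lamk := by
        simp only [hcf]
        rw [if_neg (by omega : ¬ k = 1)]
        simp
      have hcfr : ∀ r, r ≠ 1 → r ≠ k → cf r = 1 := by
        intro r hr1 hrk
        simp only [hcf]
        rw [if_neg hr1, if_neg hrk]
      have hcpos : ∀ i, 0 < cf i := by
        intro i
        simp only [hcf]
        split_ifs <;> linarith
      have h1nk : (1:ℕ) ∉ insert k (Finset.Icc (k+1) l) := by
        simp only [Finset.mem_insert, Finset.mem_Icc]
        omega
      have hknI : k ∉ Finset.Icc (k+1) l := by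
        simp only [Finset.mem_Icc]
        omega
      have hcard : 2 ≤ (insert 1 (insert k (Finset.Icc (k+1) l))).card := by
        rw [Finset.card_insert_of_notMem h1nk, Finset.card_insert_of_notMem hknI]
        omega
      have hsub : ∀ i ∈ insert 1 (insert k (Finset.Icc (k+1) l)),
          i ∈ Finset.Icc 1 l ∧ (k ≤ i ∨ i = 1) := by
        intro i hi
        simp only [Finset.mem_insert, Finset.mem_Icc] at hi
        rw [Finset.mem_Icc]
        omega
      have hterm : ∀ i j', |dt (cf i • u i) (cf j' • u j')|
          = cf i * (cf j' * |dt (u i) (u j')|) := by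
        intro i j'
        rw [dt_smul_left, dt_smul_right, abs_mul, abs_mul,
          abs_of_pos (hcpos i), abs_of_pos (hcpos j')]
      obtain ⟨c, hc, hrep⟩ := Zhard_gen ε hεpm (insert 1 (insert k (Finset.Icc (k+1) l))) hcard
        (fun i => cf i • u i)
        (fun i hi j' hj' hij => by
          rw [dt_smul_left, dt_smul_right]
          have h1 := (hsub i hi).1
          have h2 := (hsub j' hj').1
          have hp := hord i h1 j' h2 hij
          have c1 := hcpos i
          have c2 := hcpos j'
          have hq : ε * (cf i * (cf j' * dt (u i) (u j')))
              = cf i * (cf j' * (ε * dt (u i) (u j'))) := by ring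
          rw [hq]
          exact mul_pos c1 (mul_pos c2 hp))
        (x - (2:ℝ)⁻¹ • t)
        (fun i hi => by
          have hiIcc := (hsub i hi).1
          have hicase := (hsub i hi).2
          have hw := hwidth i hiIcc hicase
          rw [dt_smul_left, abs_mul,
            abs_of_pos (hcpos i)]
          have hsum : ∑ j' ∈ insert 1 (insert k (Finset.Icc (k+1) l)),
              |dt (cf i • u i) (cf j' • u j')|
              = cf i * ((1-lam1) * |dt (u i) (u 1)| + ((1-lamk) * |dt (u i) (u k)|
                  + ∑ r ∈ Finset.Icc (k+1) l, |dt (u i) (u r)|)) := by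
            rw [Finset.sum_congr rfl (fun j' _ => hterm i j'), ← Finset.mul_sum]
            congr 1
            rw [Finset.sum_insert h1nk, Finset.sum_insert hknI, hcf1, hcfk]
            congr 2
            exact Finset.sum_congr rfl (fun r hr => by
              have := Finset.mem_Icc.1 hr
              rw [hcfr r (by omega) (by omega), one_mul])
          rw [show ∑ j' ∈ insert 1 (insert k (Finset.Icc (k+1) l)),
              |dt (cf i • u i) ((fun i => cf i • u i) j')| =
              ∑ j' ∈ insert 1 (insert k (Finset.Icc (k+1) l)),
              |dt (cf i • u i) (cf j' • u j')| from rfl, hsum]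
          have := hcpos i
          nlinarith [hw, hcpos i])
      rw [hrep, Finset.sum_insert h1nk, Finset.sum_insert hknI, ← add_assoc]
      refine Set.add_mem_add (Set.add_mem_add ?_ ?_) ?_
      · rw [show cf 1 • u 1 = (1-lam1) • u 1 from by rw [hcf1]]
        exact mem_cseg2_iff.2 ⟨c 1, hc 1 (Finset.mem_insert_self 1 _), rfl⟩
      · rw [show cf k • u k = (1-lamk) • u k from by rw [hcfk]]
        exact mem_cseg2_iff.2 ⟨c k,
          hc k (Finset.mem_insert_of_mem (Finset.mem_insert_self k _)), rfl⟩
      · have hcong : ∑ r ∈ Finset.Icc (k+1) l, c r • cf r • u r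
              = ∑ r ∈ Finset.Icc (k+1) l, c r • u r := by
          refine Finset.sum_congr rfl (fun r hr => ?_)
          have := Finset.mem_Icc.1 hr
          rw [hcfr r (by omega) (by omega), one_smul]
        rw [hcong]
        exact (mem_zono_iff _ _ _).2 ⟨c, fun i hi =>
          hc i (Finset.mem_insert_of_mem (Finset.mem_insert_of_mem hi)), rfl⟩
    · -- λk = 1
      have hlk : lamk = 1 := le_antisymm hk1 (not_lt.1 hlk1)
      rcases eq_or_lt_of_le hkl with hkeq | hklt
      · -- k = l : degenerate segment case
        subst hkeq
        have hIempty : Finset.Icc (k+1) k = (∅ : Finset ℕ) := Finset.Icc_eq_empty (by omega)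
        have hz1 : dt (u 1) (x - (2:ℝ)⁻¹ • t) = 0 := by
          have hw := hwidth 1 h1m (Or.inr rfl)
          rw [hIempty, Finset.sum_empty, dt_self, abs_zero, hlk] at hw
          have := abs_nonneg (dt (u 1) (x - (2:ℝ)⁻¹ • t))
          have habs : |dt (u 1) (x - (2:ℝ)⁻¹ • t)| = 0 := by linarith [hw]
          exact abs_eq_zero.1 habs
        obtain ⟨cc, hcc⟩ := collinear_of_dt_eq_zero hz1 (hnz 1 h1m)
        have hwk := hwidth k hkm (Or.inl le_rfl)
        rw [hIempty, Finset.sum_empty, hlk, hcc, dt_smul_right, abs_mul] at hwk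
        have hdklnz : |dt (u k) (u 1)| > 0 :=
          abs_pos.2 (dtnz k hkm 1 h1m (by omega))
        have hccb : |cc| ≤ (1-lam1)/2 := by
          have h0 : (1-lamk) * |dt (u k) (u k)| = 0 := by rw [hlk]; ring
          nlinarith [hwk, hdklnz]
        have h1l1 : (0:ℝ) < 1 - lam1 := by linarith
        have hmem1 : x - (2:ℝ)⁻¹ • t ∈ cseg2 ((1 - lam1) • u 1) := by
          refine mem_cseg2_iff.2 ⟨cc / (1-lam1), ?_, ?_⟩
          · rw [abs_div, abs_of_pos h1l1, div_le_iff₀ h1l1]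
            calc |cc| ≤ (1-lam1)/2 := hccb
              _ = 2⁻¹ * (1-lam1) := by ring
          · rw [hcc, smul_smul, div_mul_cancel₀ _ h1l1.ne']
        have hmem2 : (0 : Fin 2 → ℝ) ∈ cseg2 ((1 - lamk) • u k) :=
          mem_cseg2_iff.2 ⟨0, by norm_num, by rw [zero_smul]⟩
        have hmem3 := Set.add_mem_add (Set.add_mem_add hmem1 hmem2) (Set.mem_zero.2 rfl)
        rw [hIempty, Finset.sum_empty]
        simpa using hmem3
      · -- λk = 1, k < l
        have hInk : (1:ℕ) ∉ Finset.Icc (k+1) l := by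
          simp only [Finset.mem_Icc]
          omega
        have hcard : 2 ≤ (insert 1 (Finset.Icc (k+1) l)).card := by
          rw [Finset.card_insert_of_notMem hInk, Nat.card_Icc]
          omega
        set cf : ℕ → ℝ := fun i => if i = 1 then 1-lam1 else 1 with hcf
        have hcf1 : cf 1 = 1 - lam1 := by simp [hcf]
        have hcfr : ∀ r, r ≠ 1 → cf r = 1 := by
          intro r hr1
          simp only [hcf]
          rw [if_neg hr1]
        have hcpos : ∀ i, 0 < cf i := by
          intro i
          simp only [hcf]
          split_ifs <;> linarith
        have hsub : ∀ i ∈ insert 1 (Finset.Icc (k+1) l),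
            i ∈ Finset.Icc 1 l ∧ (k ≤ i ∨ i = 1) := by
          intro i hi
          simp only [Finset.mem_insert, Finset.mem_Icc] at hi
          rw [Finset.mem_Icc]
          omega
        have hterm : ∀ i j', |dt (cf i • u i) (cf j' • u j')|
            = cf i * (cf j' * |dt (u i) (u j')|) := by
          intro i j'
          rw [dt_smul_left, dt_smul_right, abs_mul, abs_mul,
            abs_of_pos (hcpos i), abs_of_pos (hcpos j')]
        obtain ⟨c, hc, hrep⟩ := Zhard_gen ε hεpm (insert 1 (Finset.Icc (k+1) l)) hcard
          (fun i => cf i • u i)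
          (fun i hi j' hj' hij => by
            rw [dt_smul_left, dt_smul_right]
            have h1 := (hsub i hi).1
            have h2 := (hsub j' hj').1
            have hp := hord i h1 j' h2 hij
            have c1 := hcpos i
            have c2 := hcpos j'
            have hq : ε * (cf i * (cf j' * dt (u i) (u j')))
                = cf i * (cf j' * (ε * dt (u i) (u j'))) := by ring
            rw [hq]
            exact mul_pos c1 (mul_pos c2 hp))
          (x - (2:ℝ)⁻¹ • t)
          (fun i hi => by
            have hiIcc := (hsub i hi).1
            have hicase := (hsub i hi).2
            have hw := hwidth i hiIcc hicase
            rw [hlk] at hw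
            rw [dt_smul_left, abs_mul,
              abs_of_pos (hcpos i)]
            have hsum : ∑ j' ∈ insert 1 (Finset.Icc (k+1) l),
                |dt (cf i • u i) (cf j' • u j')|
                = cf i * ((1-lam1) * |dt (u i) (u 1)|
                    + ∑ r ∈ Finset.Icc (k+1) l, |dt (u i) (u r)|) := by
              rw [Finset.sum_congr rfl (fun j' _ => hterm i j'), ← Finset.mul_sum]
              congr 1
              rw [Finset.sum_insert hInk, hcf1]
              congr 1
              exact Finset.sum_congr rfl (fun r hr => by
                have := Finset.mem_Icc.1 hr
                rw [hcfr r (by omega), one_mul])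
            rw [show ∑ j' ∈ insert 1 (Finset.Icc (k+1) l),
                |dt (cf i • u i) ((fun i => cf i • u i) j')| =
                ∑ j' ∈ insert 1 (Finset.Icc (k+1) l),
                |dt (cf i • u i) (cf j' • u j')| from rfl, hsum]
            nlinarith [hw, hcpos i])
        rw [hrep, Finset.sum_insert hInk]
        have hmem2 : (0 : Fin 2 → ℝ) ∈ cseg2 ((1 - lamk) • u k) :=
          mem_cseg2_iff.2 ⟨0, by norm_num, by rw [zero_smul]⟩
        have hmem1 : c 1 • cf 1 • u 1 ∈ cseg2 ((1 - lam1) • u 1) := by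
          rw [hcf1]
          exact mem_cseg2_iff.2 ⟨c 1, hc 1 (Finset.mem_insert_self 1 _), rfl⟩
        have hcong : ∑ r ∈ Finset.Icc (k+1) l, c r • cf r • u r
            = ∑ r ∈ Finset.Icc (k+1) l, c r • u r := by
          refine Finset.sum_congr rfl (fun r hr => ?_)
          have := Finset.mem_Icc.1 hr
          rw [hcfr r (by omega), one_smul]
        rw [hcong]
        have hmem3 : ∑ r ∈ Finset.Icc (k+1) l, c r • u r
            ∈ ∑ i ∈ Finset.Icc (k+1) l, cseg2 (u i) :=
          (mem_zono_iff _ _ _).2 ⟨c, fun i hi =>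
            hc i (Finset.mem_insert_of_mem hi), rfl⟩
        have hfin := Set.add_mem_add (Set.add_mem_add hmem1 hmem2) hmem3
        rw [show c 1 • cf 1 • u 1 + (0:Fin 2 → ℝ)
            = c 1 • cf 1 • u 1 from add_zero _] at hfin
        exact hfin
  · rintro ⟨y, hy, rfl⟩
    rw [Set.mem_add] at hy
    obtain ⟨ab, hab, z3, hz3, rfl⟩ := hy
    rw [Set.mem_add] at hab
    obtain ⟨z1, hz1, z2, hz2, rfl⟩ := hab
    obtain ⟨s1, hs1, rfl⟩ := mem_cseg2_iff.1 hz1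
    obtain ⟨sk, hsk, rfl⟩ := mem_cseg2_iff.1 hz2
    obtain ⟨c, hcb, rfl⟩ := (mem_zono_iff _ _ _).1 hz3
    have h1l1 : (0:ℝ) ≤ 1 - lam1 := by linarith
    have h1lk : (0:ℝ) ≤ 1 - lamk := by linarith
    have habs1 := abs_le.1 hs1
    have habsk := abs_le.1 hsk
    constructor
    · rw [hF, mem_zono_iff]
      refine ⟨fun i => if i = 1 then s1*(1-lam1) + lam1/2 else if i = k then sk*(1-lamk) + lamk/2
        else if i < k then 2⁻¹ else c i, ?_, ?_⟩
      · intro i hi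
        beta_reduce
        split_ifs with hh1 hh2 hh3
        · rw [abs_le]
          constructor <;> nlinarith [habs1.1, habs1.2]
        · rw [abs_le]
          constructor <;> nlinarith [habsk.1, habsk.2]
        · rw [abs_of_nonneg (by norm_num : (0:ℝ) ≤ 2⁻¹)]
        · refine hcb i (Finset.mem_Icc.2 ⟨by omega, (Finset.mem_Icc.1 hi).2⟩)
      · rw [sum_split4 hk2 hkl (fun i => (if i = 1 then s1*(1-lam1) + lam1/2
          else if i = k then sk*(1-lamk) + lamk/2 else if i < k then (2⁻¹:ℝ) else c i) • u i)]
        beta_reduce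
        rw [if_pos rfl, if_neg (by omega : ¬ k = 1), if_pos rfl]
        have hcmid : ∑ i ∈ Finset.Icc 2 (k-1), (if i = 1 then s1*(1-lam1) + lam1/2
            else if i = k then sk*(1-lamk) + lamk/2 else if i < k then (2⁻¹:ℝ) else c i) • u i
            = ∑ i ∈ Finset.Icc 2 (k-1), (2⁻¹:ℝ) • u i := by
          refine Finset.sum_congr rfl (fun i hi => ?_)
          have := Finset.mem_Icc.1 hi
          rw [if_neg (by omega), if_neg (by omega), if_pos (by omega)]
        have hctop : ∑ i ∈ Finset.Icc (k+1) l, (if i = 1 then s1*(1-lam1) + lam1/2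
            else if i = k then sk*(1-lamk) + lamk/2 else if i < k then (2⁻¹:ℝ) else c i) • u i
            = ∑ i ∈ Finset.Icc (k+1) l, c i • u i := by
          refine Finset.sum_congr rfl (fun i hi => ?_)
          have := Finset.mem_Icc.1 hi
          rw [if_neg (by omega), if_neg (by omega), if_neg (by omega)]
        rw [hcmid, hctop, ← Finset.smul_sum, ht]
        module
    · refine ⟨s1 • ((1-lam1) • u 1) + sk • ((1-lamk) • u k)
        + (∑ i ∈ Finset.Icc (k+1) l, c i • u i) - (2:ℝ)⁻¹ • t, ?_, by module⟩
      rw [hF, mem_zono_iff]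
      refine ⟨fun i => if i = 1 then s1*(1-lam1) - lam1/2 else if i = k then sk*(1-lamk) - lamk/2
        else if i < k then -2⁻¹ else c i, ?_, ?_⟩
      · intro i hi
        beta_reduce
        split_ifs with hh1 hh2 hh3
        · rw [abs_le]
          constructor <;> nlinarith [habs1.1, habs1.2]
        · rw [abs_le]
          constructor <;> nlinarith [habsk.1, habsk.2]
        · rw [abs_of_nonpos (by norm_num : (-2⁻¹:ℝ) ≤ 0)]
          norm_num
        · refine hcb i (Finset.mem_Icc.2 ⟨by omega, (Finset.mem_Icc.1 hi).2⟩)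
      · rw [sum_split4 hk2 hkl (fun i => (if i = 1 then s1*(1-lam1) - lam1/2
          else if i = k then sk*(1-lamk) - lamk/2 else if i < k then (-2⁻¹:ℝ) else c i) • u i)]
        beta_reduce
        rw [if_pos rfl, if_neg (by omega : ¬ k = 1), if_pos rfl]
        have hcmid : ∑ i ∈ Finset.Icc 2 (k-1), (if i = 1 then s1*(1-lam1) - lam1/2
            else if i = k then sk*(1-lamk) - lamk/2 else if i < k then (-2⁻¹:ℝ) else c i) • u i
            = ∑ i ∈ Finset.Icc 2 (k-1), (-2⁻¹:ℝ) • u i := by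
          refine Finset.sum_congr rfl (fun i hi => ?_)
          have := Finset.mem_Icc.1 hi
          rw [if_neg (by omega), if_neg (by omega), if_pos (by omega)]
        have hctop : ∑ i ∈ Finset.Icc (k+1) l, (if i = 1 then s1*(1-lam1) - lam1/2
            else if i = k then sk*(1-lamk) - lamk/2 else if i < k then (-2⁻¹:ℝ) else c i) • u i
            = ∑ i ∈ Finset.Icc (k+1) l, c i • u i := by
          refine Finset.sum_congr rfl (fun i hi => ?_)
          have := Finset.mem_Icc.1 hi
          rw [if_neg (by omega), if_neg (by omega), if_neg (by omega)]
        rw [hcmid, hctop, ← Finset.smul_sum, ht]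
        module
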